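/- Let X be a two-dimensional real normed space with unit sphere S satisfying, for some 0 < ρ < 1, property (P-ρS). Then the map u ↦ u*, where u* is the unique point of S with u ≺ u* such that [u, u*] supports ρS, is a homeomorphism of S onto S, and it preserves the cyclic order: if u ≺ v then u* ≺ v*. -/

import Mathlib

/-!
A chord `[u, w]` of `S` with `u ≺ w` that supports `ρS` has the ball `ρB` on the side of the
line `uw` containing the origin, while every point of `S` strictly between `u` and `w` lies
strictly beyond that line. Hence no two supporting chords are nested: the touching point of the
inner chord would lie beyond the outer one. By the Plücker relation, a failure of `u* ≺ v*` for
`u ≺ v` produces such a nesting, possibly after reflecting through the origin; together with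
`(-u)* = -u*` this also makes `u ↦ u*` injective. Rotating `u` from `w` to `-w`, the intermediate
value theorem finds a supporting chord ending at any given `w`, so the map is onto. Its graph is
`{(x, y) | segInf x y = ρ, x ≼ y}`, a closed set, and `S` is compact, so it is continuous and
hence a homeomorphism.
-/

open Real Set

/-- `N` is a norm on the two-dimensional real vector space `ℝ × ℝ`. -/
def IsNorm (N : ℝ × ℝ → ℝ) : Prop :=
  (∀ x, N x = 0 ↔ x = 0) ∧ (∀ (a : ℝ) (x : ℝ × ℝ), N (a • x) = |a| * N x) ∧
    ∀ x y, N (x + y) ≤ N x + N y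

/-- The 2D cross product `u ∧ v`; `u ≺ v` means `0 < wedge u v`. -/
def wedge (u v : ℝ × ℝ) : ℝ := u.1 * v.2 - u.2 * v.1

/-- `inf_{t ∈ [0,1]} N ((1−t)u + tv)`, the minimal `N`-norm on the segment `[u,v]`. -/
noncomputable def segInf (N : ℝ × ℝ → ℝ) (u v : ℝ × ℝ) : ℝ :=
  sInf ((fun t : ℝ => N ((1 - t) • u + t • v)) '' Icc (0:ℝ) 1)

/-- Property (P-ρS): every chord of the unit sphere of `N` that supports `ρS`
touches `ρS` at its midpoint. -/
def PropP (N : ℝ × ℝ → ℝ) (ρ : ℝ) : Prop :=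
  ∀ u v : ℝ × ℝ, N u = 1 → N v = 1 → segInf N u v = ρ →
    N ((1/2 : ℝ) • u + (1/2 : ℝ) • v) = ρ

theorem continuous_of_isClosed_graph_of_compactSpace {X Y : Type*} [TopologicalSpace X]
    [TopologicalSpace Y] [CompactSpace Y] {f : X → Y} (hf : IsClosed {p : X × Y | p.2 = f p.1}) :
    Continuous f := by
  rw [continuous_iff_isClosed]
  intro C hC
  have hpre : f ⁻¹' C = Prod.fst '' ({p : X × Y | p.2 = f p.1} ∩ Prod.snd ⁻¹' C) := by
    ext x
    simp
  rw [hpre]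
  exact isClosedMap_fst_of_compactSpace _ (hf.inter (hC.preimage continuous_snd))

namespace IsNorm

variable {N : ℝ × ℝ → ℝ}

theorem map_zero (hN : IsNorm N) : N 0 = 0 := (hN.1 0).2 rfl

theorem map_smul (hN : IsNorm N) (a : ℝ) (x : ℝ × ℝ) : N (a • x) = |a| * N x := hN.2.1 a x

theorem add_le (hN : IsNorm N) (x y : ℝ × ℝ) : N (x + y) ≤ N x + N y := hN.2.2 x y

theorem map_neg (hN : IsNorm N) (x : ℝ × ℝ) : N (-x) = N x := by
  simpa using hN.map_smul (-1) x

theorem nonneg (hN : IsNorm N) (x : ℝ × ℝ) : 0 ≤ N x := by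
  have h := hN.add_le x (-x)
  rw [add_neg_cancel, hN.map_zero, hN.map_neg] at h
  linarith

theorem ne_zero_of_eq_one (hN : IsNorm N) {x : ℝ × ℝ} (hx : N x = 1) : x ≠ 0 := by
  rintro rfl
  simp [hN.map_zero] at hx

theorem convexOn (hN : IsNorm N) : ConvexOn ℝ univ N := by
  refine ⟨convex_univ, fun x _ y _ a b ha hb _ => ?_⟩
  calc N (a • x + b • y) ≤ N (a • x) + N (b • y) := hN.add_le _ _
    _ = a • N x + b • N y := by
      rw [hN.map_smul, hN.map_smul, abs_of_nonneg ha, abs_of_nonneg hb, smul_eq_mul,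
        smul_eq_mul]

protected theorem continuous (hN : IsNorm N) : Continuous N :=
  continuousOn_univ.1 (hN.convexOn.continuousOn isOpen_univ)

theorem isCompact_sphere (hN : IsNorm N) : IsCompact {x | N x = 1} := by
  have hS : {x | N x = 1} = (fun x => (N x)⁻¹ • x) '' Metric.sphere 0 1 := by
    ext y
    constructor
    · intro (hy : N y = 1)
      have hy0 : 0 < ‖y‖ := norm_pos_iff.2 (hN.ne_zero_of_eq_one hy)
      refine ⟨‖y‖⁻¹ • y, by simp [norm_smul, hy0.ne'], ?_⟩
      dsimp only
      rw [hN.map_smul, abs_inv, abs_norm, hy, mul_one, inv_inv, smul_smul,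
        mul_inv_cancel₀ hy0.ne', one_smul]
    · rintro ⟨x, hx, rfl⟩
      have hx0 : N x ≠ 0 := fun h => by simp [(hN.1 x).1 h] at hx
      show N ((N x)⁻¹ • x) = 1
      rw [hN.map_smul, abs_inv, abs_of_nonneg (hN.nonneg x), inv_mul_cancel₀ hx0]
  rw [hS]
  refine (_root_.isCompact_sphere 0 1).image_of_continuousOn
    ((hN.continuous.continuousOn.inv₀ fun x hx h => ?_).smul continuousOn_id)
  simp [(hN.1 x).1 h] at hx

theorem compactSpace_sphere (hN : IsNorm N) : CompactSpace {x : ℝ × ℝ // N x = 1} :=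
  isCompact_iff_compactSpace.mp hN.isCompact_sphere

theorem one_le_norm_lineMap_of_nonpos (hN : IsNorm N) {u w : ℝ × ℝ} (hu : N u = 1)
    (hw : N w = 1) {r : ℝ} (hr : r ≤ 0) : 1 ≤ N ((1 - r) • u + r • w) := by
  have h := hN.add_le ((1 - r) • u + r • w) ((-r) • w)
  rw [show (1 - r) • u + r • w + (-r) • w = (1 - r) • u by module, hN.map_smul, hN.map_smul,
    abs_of_nonneg (by linarith), abs_of_nonneg (by linarith), hu, hw] at h
  linarith

end IsNorm

section SegInf

variable {N : ℝ × ℝ → ℝ}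

theorem IsNorm.continuous_segInf (hN : IsNorm N) :
    Continuous fun p : (ℝ × ℝ) × (ℝ × ℝ) => segInf N p.1 p.2 :=
  isCompact_Icc.continuous_sInf (hN.continuous.comp (by fun_prop))

theorem IsNorm.exists_eq_segInf (hN : IsNorm N) (u v : ℝ × ℝ) :
    ∃ t ∈ Icc (0 : ℝ) 1, N ((1 - t) • u + t • v) = segInf N u v :=
  (isCompact_Icc.image (hN.continuous.comp (by fun_prop))).sInf_mem
    ((nonempty_Icc.2 zero_le_one).image _)

theorem IsNorm.segInf_le (hN : IsNorm N) (u v : ℝ × ℝ) {t : ℝ} (ht : t ∈ Icc (0 : ℝ) 1) :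
    segInf N u v ≤ N ((1 - t) • u + t • v) :=
  csInf_le ⟨0, fun _ ⟨_, _, hs⟩ => hs ▸ hN.nonneg _⟩ (mem_image_of_mem _ ht)

theorem IsNorm.segInf_neg (hN : IsNorm N) (u v : ℝ × ℝ) :
    segInf N (-u) (-v) = segInf N u v := by
  have h : ∀ t : ℝ, N ((1 - t) • -u + t • -v) = N ((1 - t) • u + t • v) := fun t => by
    rw [← hN.map_neg]; congr 1; module
  simp only [segInf, h]

theorem segInf_self (N : ℝ × ℝ → ℝ) (u : ℝ × ℝ) : segInf N u u = N u := by
  have h : ∀ t : ℝ, (1 - t) • u + t • u = u := fun t => by module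
  simp only [segInf, h, (nonempty_Icc.2 zero_le_one).image_const, csInf_singleton]

theorem IsNorm.segInf_neg_self (hN : IsNorm N) (u : ℝ × ℝ) : segInf N u (-u) = 0 := by
  refine le_antisymm ?_ ?_
  · have h := hN.segInf_le u (-u) (t := 1 / 2) (by norm_num)
    rwa [show (1 - 1 / 2 : ℝ) • u + (1 / 2 : ℝ) • -u = 0 by module, hN.map_zero] at h
  · obtain ⟨t, -, ht⟩ := hN.exists_eq_segInf u (-u)
    exact ht ▸ hN.nonneg _

theorem IsNorm.lt_one_of_segInf_lt_one (hN : IsNorm N) {u w : ℝ × ℝ} (hu : N u = 1)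
    (hw : N w = 1) (hseg : segInf N u w < 1) {t : ℝ} (ht : t ∈ Ioo (0 : ℝ) 1) :
    N ((1 - t) • u + t • w) < 1 := by
  set φ : ℝ → ℝ := fun s => N ((1 - s) • u + s • w)
  have hφ : ConvexOn ℝ univ φ := by
    have := hN.convexOn.comp_affineMap (AffineMap.lineMap u w)
    simpa [Function.comp_def, AffineMap.lineMap_apply_module] using this
  obtain ⟨t₀, ht₀, hφt₀⟩ := hN.exists_eq_segInf u w
  have h0 : φ 0 = 1 := by simp [φ, hu]
  have h1 : φ 1 = 1 := by simp [φ, hw]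
  show φ t < 1
  by_contra! hge
  rcases lt_trichotomy t t₀ with hlt | rfl | hgt
  · have := hφ.lt_left_of_right_lt (mem_univ 0) (mem_univ t₀)
      (Ioo_subset_openSegment ⟨ht.1, hlt⟩) (by simp only [φ] at hφt₀ ⊢; linarith)
    linarith
  · simp only [φ] at hφt₀ hge; linarith
  · have := hφ.lt_right_of_left_lt (mem_univ t₀) (mem_univ 1)
      (Ioo_subset_openSegment ⟨hgt, ht.2⟩) (by simp only [φ] at hφt₀ ⊢; linarith)
    linarith

end SegInf

theorem wedge_anticomm (u v : ℝ × ℝ) : wedge u v = -wedge v u := by unfold wedge; ring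

theorem wedge_self (u : ℝ × ℝ) : wedge u u = 0 := by unfold wedge; ring

theorem wedge_neg_left (u v : ℝ × ℝ) : wedge (-u) v = -wedge u v := by simp [wedge]; ring

theorem wedge_neg_right (u v : ℝ × ℝ) : wedge u (-v) = -wedge u v := by simp [wedge]; ring

theorem wedge_smul_left (a : ℝ) (u v : ℝ × ℝ) : wedge (a • u) v = a * wedge u v := by
  simp [wedge]; ring

theorem wedge_smul_add_smul (a u v : ℝ × ℝ) (s t : ℝ) :
    wedge a (s • u + t • v) = s * wedge a u + t * wedge a v := by
  simp [wedge]; ring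

theorem continuous_wedge : Continuous fun p : (ℝ × ℝ) × (ℝ × ℝ) => wedge p.1 p.2 := by
  unfold wedge; fun_prop

/-- Plücker relation. -/
theorem wedge_mul_wedge (u v w x : ℝ × ℝ) :
    wedge u v * wedge w x = wedge u w * wedge v x - wedge u x * wedge v w := by
  unfold wedge; ring

/-- Cramer's rule. -/
theorem wedge_smul_eq_add (u w x : ℝ × ℝ) :
    wedge u w • x = wedge x w • u + wedge u x • w := by
  unfold wedge; ext <;> simp <;> ring

theorem sq_add_sq_pos_of_ne_zero {x : ℝ × ℝ} (hx : x ≠ 0) : 0 < x.1 ^ 2 + x.2 ^ 2 := by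
  by_contra! h0
  apply hx
  ext <;> simp only [Prod.fst_zero, Prod.snd_zero] <;> nlinarith [sq_nonneg x.1, sq_nonneg x.2]

theorem exists_eq_smul_of_wedge_eq_zero {x y : ℝ × ℝ} (hx : x ≠ 0) (h : wedge x y = 0) :
    ∃ c : ℝ, y = c • x := by
  have hx2 := (sq_add_sq_pos_of_ne_zero hx).ne'
  refine ⟨(x.1 * y.1 + x.2 * y.2) / (x.1 ^ 2 + x.2 ^ 2), ?_⟩
  unfold wedge at h
  ext <;> simp only [Prod.smul_fst, Prod.smul_snd, smul_eq_mul] <;> field_simp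
  · linear_combination -x.2 * h
  · linear_combination x.1 * h

theorem IsNorm.eq_or_eq_neg_of_wedge_eq_zero {N : ℝ × ℝ → ℝ} (hN : IsNorm N) {x y : ℝ × ℝ}
    (hx : N x = 1) (hy : N y = 1) (h : wedge x y = 0) : y = x ∨ y = -x := by
  obtain ⟨c, rfl⟩ := exists_eq_smul_of_wedge_eq_zero (hN.ne_zero_of_eq_one hx) h
  rw [hN.map_smul, hx, mul_one] at hy
  rcases (abs_eq zero_le_one).1 hy with rfl | rfl <;> simp

/-- `[u, w]` is a chord of the unit sphere of `N` with `u ≺ w` that supports `ρS`. -/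
def IsTangentChord (N : ℝ × ℝ → ℝ) (ρ : ℝ) (u w : ℝ × ℝ) : Prop :=
  N u = 1 ∧ N w = 1 ∧ 0 < wedge u w ∧ segInf N u w = ρ

namespace IsTangentChord

variable {N : ℝ × ℝ → ℝ} {ρ : ℝ} {u w : ℝ × ℝ}

theorem neg (hN : IsNorm N) (h : IsTangentChord N ρ u w) : IsTangentChord N ρ (-u) (-w) := by
  obtain ⟨hu, hw, huw, hseg⟩ := h
  refine ⟨by rwa [hN.map_neg], by rwa [hN.map_neg], ?_, by rwa [hN.segInf_neg]⟩
  rwa [wedge_neg_left, wedge_neg_right, neg_neg]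

theorem le_norm_lineMap (hN : IsNorm N) (h : IsTangentChord N ρ u w) (r : ℝ) :
    ρ ≤ N ((1 - r) • u + r • w) := by
  obtain ⟨hu, hw, -, rfl⟩ := h
  have hle : segInf N u w ≤ 1 := by simpa [hu] using hN.segInf_le u w (t := 0) (by simp)
  rcases le_or_gt r 0 with hr | hr
  · exact hle.trans (hN.one_le_norm_lineMap_of_nonpos hu hw hr)
  rcases le_or_gt r 1 with hr' | hr'
  · exact hN.segInf_le u w ⟨hr.le, hr'⟩
  · have := hN.one_le_norm_lineMap_of_nonpos hw hu (r := 1 - r) (by linarith)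
    rw [show (1 - (1 - r)) • w + (1 - r) • u = (1 - r) • u + r • w by module] at this
    exact hle.trans this

/-- The ball `ρB` lies on the side of the line `uw` that contains the origin. -/
theorem wedge_sub_nonneg (hN : IsNorm N) (hρ0 : 0 < ρ) (h : IsTangentChord N ρ u w)
    {z : ℝ × ℝ} (hz : N z ≤ ρ) : 0 ≤ wedge (w - u) (z - u) := by
  have huw := h.2.2.1
  by_contra! hneg
  set μ := wedge u w / (wedge u w - wedge (w - u) (z - u))
  have hμ0 : 0 < μ := div_pos huw (by linarith)
  have hμ1 : μ < 1 := (div_lt_one (by linarith)).2 (by linarith)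
  have hwu : w - u ≠ 0 := fun h0 => by
    rw [sub_eq_zero.1 h0, wedge_self] at huw
    exact huw.false
  -- Otherwise the segment `[0, z]` crosses the line `uw` at `μ • z`, of norm less than `ρ`.
  obtain ⟨r, hr⟩ := exists_eq_smul_of_wedge_eq_zero hwu (y := μ • z - u) (by
    have ha : wedge (w - u) u = -wedge u w := by simp [wedge]; ring
    rw [show μ • z - u = μ • (z - u) + (1 - μ) • -u by module, wedge_smul_add_smul,
      wedge_neg_right, ha]
    have hμ : μ * (wedge u w - wedge (w - u) (z - u)) = wedge u w :=
      div_mul_cancel₀ _ (by linarith)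
    linarith)
  have := h.le_norm_lineMap hN r
  rw [show (1 - r) • u + r • w = μ • z by linear_combination (norm := module) -hr,
    hN.map_smul, abs_of_pos hμ0] at this
  nlinarith

/-- A point of the unit sphere strictly between `u` and `w` lies strictly beyond the line `uw`. -/
theorem wedge_sub_neg (hN : IsNorm N) (hρ1 : ρ < 1) (h : IsTangentChord N ρ u w)
    {x : ℝ × ℝ} (hx : N x = 1) (hux : 0 < wedge u x) (hxw : 0 < wedge x w) :
    wedge (w - u) (x - u) < 0 := by
  obtain ⟨hu, hw, huw, hseg⟩ := h
  set c₁ := wedge x w / wedge u w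
  set c₂ := wedge u x / wedge u w
  have hc₁ : 0 < c₁ := div_pos hxw huw
  have hc₂ : 0 < c₂ := div_pos hux huw
  have hx_eq : x = c₁ • u + c₂ • w := by
    rw [← inv_smul_smul₀ huw.ne' x, wedge_smul_eq_add]
    module
  have hsum : 1 < c₁ + c₂ := by
    have hle : 1 ≤ c₁ + c₂ := by
      have := hN.add_le (c₁ • u) (c₂ • w)
      rwa [← hx_eq, hx, hN.map_smul, hN.map_smul, abs_of_pos hc₁, abs_of_pos hc₂, hu, hw,
        mul_one, mul_one] at this
    refine hle.lt_of_ne fun heq => ?_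
    have := hN.lt_one_of_segInf_lt_one hu hw (hseg ▸ hρ1) (t := c₂) ⟨hc₂, by linarith⟩
    rw [show (1 - c₂) • u + c₂ • w = x by rw [hx_eq, show 1 - c₂ = c₁ by linarith], hx] at this
    exact this.false
  have hval : wedge (w - u) (x - u) = -(c₁ + c₂ - 1) * wedge u w := by
    rw [hx_eq]; simp only [wedge, Prod.fst_sub, Prod.snd_sub, Prod.fst_add, Prod.snd_add,
      Prod.smul_fst, Prod.smul_snd, smul_eq_mul]; ring
  rw [hval]
  exact mul_neg_of_neg_of_pos (by linarith) huw

theorem not_nested (hN : IsNorm N) (hρ0 : 0 < ρ) (hρ1 : ρ < 1) {v w₁ w₂ : ℝ × ℝ}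
    (h₁ : IsTangentChord N ρ u w₁) (h₂ : IsTangentChord N ρ v w₂) (huv : 0 < wedge u v)
    (hvw₁ : 0 < wedge v w₁) (huw₂ : 0 < wedge u w₂) (hw : 0 ≤ wedge w₂ w₁) : False := by
  obtain ⟨hv, hw₂, hvw₂, hseg₂⟩ := h₂
  have hv_side : wedge (w₁ - u) (v - u) < 0 := h₁.wedge_sub_neg hN hρ1 hv huv hvw₁
  have hw₂_side : wedge (w₁ - u) (w₂ - u) ≤ 0 := by
    rcases hw.lt_or_eq with hlt | heq
    · exact (h₁.wedge_sub_neg hN hρ1 hw₂ huw₂ hlt).le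
    · have heq' : wedge w₁ w₂ = 0 := by rw [wedge_anticomm, ← heq, neg_zero]
      rcases hN.eq_or_eq_neg_of_wedge_eq_zero h₁.2.1 hw₂ heq' with rfl | rfl
      · rw [wedge_self]
      · rw [wedge_neg_right] at hvw₂
        linarith
  -- The point where `[v, w₂]` touches `ρS` would lie strictly beyond the line `u w₁`.
  obtain ⟨t, ht, hq⟩ := hN.exists_eq_segInf v w₂
  have ht1 : t < 1 := by
    refine ht.2.lt_of_ne ?_
    rintro rfl
    simp only [sub_self, zero_smul, one_smul, zero_add, hw₂, hseg₂] at hq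
    linarith
  have hq_side :=
    h₁.wedge_sub_nonneg hN hρ0 (z := (1 - t) • v + t • w₂) (hq.trans hseg₂).le
  rw [show (1 - t) • v + t • w₂ - u = (1 - t) • (v - u) + t • (w₂ - u) by module,
    wedge_smul_add_smul] at hq_side
  nlinarith [ht.1]

theorem wedge_pos (hN : IsNorm N) (hρ0 : 0 < ρ) (hρ1 : ρ < 1) {v w₁ w₂ : ℝ × ℝ}
    (h₁ : IsTangentChord N ρ u w₁) (h₂ : IsTangentChord N ρ v w₂) (huv : 0 < wedge u v) :
    0 < wedge w₁ w₂ := by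
  by_contra! hw
  have hw' : 0 ≤ wedge w₂ w₁ := by rw [wedge_anticomm]; linarith
  -- By the Plücker relation `wedge u w₂` and `wedge v w₁` have the same sign; when both are
  -- negative, the configuration reflected through the origin is nested.
  have hprod : 0 < wedge u w₂ * wedge v w₁ := by
    have := wedge_mul_wedge u v w₂ w₁
    nlinarith [mul_pos h₁.2.2.1 h₂.2.2.1, mul_nonneg huv.le hw']
  rcases pos_and_pos_or_neg_and_neg_of_mul_pos hprod with ⟨huw₂, hvw₁⟩ | ⟨huw₂, hvw₁⟩
  · exact h₁.not_nested hN hρ0 hρ1 h₂ huv hvw₁ huw₂ hw'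
  · refine h₂.not_nested hN hρ0 hρ1 (h₁.neg hN) ?_ ?_ ?_ ?_ <;>
      simp only [wedge_neg_left, wedge_neg_right] <;>
      linarith [wedge_anticomm u v]

end IsTangentChord

theorem IsNorm.exists_isTangentChord {N : ℝ × ℝ → ℝ} (hN : IsNorm N) {ρ : ℝ} (hρ0 : 0 < ρ)
    (hρ1 : ρ < 1) {w : ℝ × ℝ} (hw : N w = 1) : ∃ u, IsTangentChord N ρ u w := by
  have hw2 := sq_add_sq_pos_of_ne_zero (hN.ne_zero_of_eq_one hw)
  -- `γ θ` is `w` rotated clockwise by the angle `θ`.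
  set γ : ℝ → ℝ × ℝ := fun θ => Real.cos θ • w + Real.sin θ • (w.2, -w.1)
  have hγw : ∀ θ, wedge (γ θ) w = Real.sin θ * (w.1 ^ 2 + w.2 ^ 2) := fun θ => by
    simp only [γ, wedge, Prod.fst_add, Prod.snd_add, Prod.smul_fst, Prod.smul_snd, smul_eq_mul]
    ring
  have hNγ : ∀ θ, N (γ θ) ≠ 0 := fun θ h0 => by
    have hsq := congrArg (fun x : ℝ × ℝ => x.1 ^ 2 + x.2 ^ 2) ((hN.1 _).1 h0)
    simp only [γ, Prod.fst_add, Prod.snd_add, Prod.smul_fst, Prod.smul_snd, smul_eq_mul,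
      Prod.fst_zero, Prod.snd_zero] at hsq
    nlinarith [Real.sin_sq_add_cos_sq θ]
  set u : ℝ → ℝ × ℝ := fun θ => (N (γ θ))⁻¹ • γ θ
  have hu : ∀ θ, N (u θ) = 1 := fun θ => by
    rw [hN.map_smul, abs_inv, abs_of_nonneg (hN.nonneg _), inv_mul_cancel₀ (hNγ θ)]
  have hcont : Continuous fun θ => segInf N (u θ) w := by
    refine hN.continuous_segInf.comp (Continuous.prodMk ?_ continuous_const)
    exact ((hN.continuous.comp (by fun_prop)).inv₀ hNγ).smul (by fun_prop)
  have hu0 : u 0 = w := by simp [u, γ, hw, Prod.mk_zero_zero]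
  have huπ : u π = -w := by simp [u, γ, hN.map_neg, hw, Prod.mk_zero_zero]
  have hf0 : segInf N (u 0) w = 1 := by rw [hu0, segInf_self, hw]
  have hfπ : segInf N (u π) w = 0 := by
    simpa [huπ] using hN.segInf_neg_self (-w)
  obtain ⟨θ, hθ, hθρ⟩ := intermediate_value_Icc' pi_pos.le hcont.continuousOn
    (show ρ ∈ Icc _ _ by rw [hf0, hfπ]; exact ⟨hρ0.le, hρ1.le⟩)
  have hθ0 : θ ≠ 0 := by rintro rfl; linarith
  have hθπ : θ ≠ π := by rintro rfl; linarith
  have hsin : 0 < Real.sin θ :=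
    Real.sin_pos_of_pos_of_lt_pi (hθ.1.lt_of_ne' hθ0) (hθ.2.lt_of_ne hθπ)
  refine ⟨u θ, hu θ, hw, ?_, hθρ⟩
  rw [wedge_smul_left, hγw]
  have := (hN.nonneg (γ θ)).lt_of_ne' (hNγ θ)
  positivity

/-- `star` is the map `u ↦ u*`. -/
def IsTangentMap (N : ℝ × ℝ → ℝ) (ρ : ℝ) (star : ℝ × ℝ → ℝ × ℝ) : Prop :=
  ∀ u, N u = 1 → ∀ w, IsTangentChord N ρ u w ↔ w = star u

namespace IsTangentMap

variable {N : ℝ × ℝ → ℝ} {ρ : ℝ} {star : ℝ × ℝ → ℝ × ℝ}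

theorem isTangentChord (h : IsTangentMap N ρ star) {u : ℝ × ℝ} (hu : N u = 1) :
    IsTangentChord N ρ u (star u) :=
  (h u hu _).2 rfl

theorem eq_of_isTangentChord (h : IsTangentMap N ρ star) {u w : ℝ × ℝ}
    (hc : IsTangentChord N ρ u w) : w = star u :=
  (h u hc.1 w).1 hc

theorem map_neg (hN : IsNorm N) (h : IsTangentMap N ρ star) {u : ℝ × ℝ} (hu : N u = 1) :
    star (-u) = -star u :=
  (h.eq_of_isTangentChord ((h.isTangentChord hu).neg hN)).symm

theorem injOn (hN : IsNorm N) (hρ0 : 0 < ρ) (hρ1 : ρ < 1) (h : IsTangentMap N ρ star) :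
    InjOn star {x | N x = 1} := by
  intro u (hu : N u = 1) v (hv : N v = 1) huv
  rcases lt_trichotomy (wedge u v) 0 with hlt | h0 | hgt
  · have := (h.isTangentChord hv).wedge_pos hN hρ0 hρ1 (h.isTangentChord hu)
      (by rw [wedge_anticomm]; linarith)
    rw [huv, wedge_self] at this
    exact this.false.elim
  · rcases hN.eq_or_eq_neg_of_wedge_eq_zero hu hv h0 with rfl | rfl
    · rfl
    · rw [h.map_neg hN hu, eq_comm, neg_eq_self] at huv
      exact (hN.ne_zero_of_eq_one (h.isTangentChord hu).2.1 huv).elim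
  · have := (h.isTangentChord hu).wedge_pos hN hρ0 hρ1 (h.isTangentChord hv) hgt
    rw [huv, wedge_self] at this
    exact this.false.elim

theorem surjOn (hN : IsNorm N) (hρ0 : 0 < ρ) (hρ1 : ρ < 1) (h : IsTangentMap N ρ star) :
    SurjOn star {x | N x = 1} {x | N x = 1} := fun _ hw =>
  let ⟨u, hu⟩ := hN.exists_isTangentChord hρ0 hρ1 hw
  ⟨u, hu.1, (h.eq_of_isTangentChord hu).symm⟩

theorem eq_iff (hN : IsNorm N) (hρ0 : 0 < ρ) (hρ1 : ρ < 1) (h : IsTangentMap N ρ star)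
    {x y : ℝ × ℝ} (hx : N x = 1) (hy : N y = 1) :
    y = star x ↔ segInf N x y = ρ ∧ 0 ≤ wedge x y := by
  rw [← h x hx y]
  refine ⟨fun hc => ⟨hc.2.2.2, hc.2.2.1.le⟩, fun ⟨hseg, hxy⟩ => ⟨hx, hy, ?_, hseg⟩⟩
  refine hxy.lt_of_ne fun h0 => ?_
  rcases hN.eq_or_eq_neg_of_wedge_eq_zero hx hy h0.symm with rfl | rfl
  · rw [segInf_self, hx] at hseg
    linarith
  · rw [hN.segInf_neg_self] at hseg
    linarith

theorem bijective_subtypeMap (hN : IsNorm N) (hρ0 : 0 < ρ) (hρ1 : ρ < 1)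
    (h : IsTangentMap N ρ star) :
    Function.Bijective (Subtype.map star fun _ hu => (h.isTangentChord hu).2.1 :
      {x : ℝ × ℝ // N x = 1} → {x : ℝ × ℝ // N x = 1}) := by
  refine ⟨fun a b hab => Subtype.ext (h.injOn hN hρ0 hρ1 a.2 b.2 (congrArg Subtype.val hab)),
    fun y => ?_⟩
  obtain ⟨x, hx, hxy⟩ := h.surjOn hN hρ0 hρ1 y.2
  exact ⟨⟨x, hx⟩, Subtype.ext hxy⟩

theorem continuous_subtypeMap (hN : IsNorm N) (hρ0 : 0 < ρ) (hρ1 : ρ < 1)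
    (h : IsTangentMap N ρ star) :
    Continuous (Subtype.map star fun _ hu => (h.isTangentChord hu).2.1 :
      {x : ℝ × ℝ // N x = 1} → {x : ℝ × ℝ // N x = 1}) := by
  have := hN.compactSpace_sphere
  refine continuous_of_isClosed_graph_of_compactSpace ?_
  have hgraph : {p : {x : ℝ × ℝ // N x = 1} × {x : ℝ × ℝ // N x = 1} |
      p.2 = Subtype.map star (fun _ hu => (h.isTangentChord hu).2.1) p.1} =
      {p | segInf N p.1 p.2 = ρ ∧ 0 ≤ wedge p.1 p.2} := by
    ext ⟨x, y⟩
    exact Subtype.ext_iff.trans (h.eq_iff hN hρ0 hρ1 x.2 y.2)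
  have hval : Continuous fun p : {x : ℝ × ℝ // N x = 1} × {x : ℝ × ℝ // N x = 1} =>
      ((p.1 : ℝ × ℝ), (p.2 : ℝ × ℝ)) := by fun_prop
  rw [hgraph]
  exact (isClosed_eq (hN.continuous_segInf.comp hval) continuous_const).inter
    (isClosed_le continuous_const (continuous_wedge.comp hval))

end IsTangentMap

theorem stmt_8_general (N : ℝ × ℝ → ℝ) (hN : IsNorm N) (ρ : ℝ) (hρ0 : 0 < ρ) (hρ1 : ρ < 1)
    (star : ℝ × ℝ → ℝ × ℝ)
    (hstar : ∀ u : ℝ × ℝ, N u = 1 →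
      (N (star u) = 1 ∧ 0 < wedge u (star u) ∧ segInf N u (star u) = ρ) ∧
      ∀ w : ℝ × ℝ, N w = 1 → 0 < wedge u w → segInf N u w = ρ → w = star u) :
    (∃ h : {x : ℝ × ℝ // N x = 1} ≃ₜ {x : ℝ × ℝ // N x = 1},
        ∀ x : {x : ℝ × ℝ // N x = 1}, (h x : ℝ × ℝ) = star x) ∧
    ∀ u v : ℝ × ℝ, N u = 1 → N v = 1 → 0 < wedge u v → 0 < wedge (star u) (star v) := by
  have h : IsTangentMap N ρ star := fun u hu w =>
    ⟨fun ⟨_, hw, huw, hseg⟩ => (hstar u hu).2 w hw huw hseg,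
      by rintro rfl; exact ⟨hu, (hstar u hu).1⟩⟩
  refine ⟨?_, fun u v hu hv => (h.isTangentChord hu).wedge_pos hN hρ0 hρ1 (h.isTangentChord hv)⟩
  have := hN.compactSpace_sphere
  exact ⟨(h.continuous_subtypeMap hN hρ0 hρ1).homeoOfEquivCompactToT2
    (f := Equiv.ofBijective _ (h.bijective_subtypeMap hN hρ0 hρ1)), fun _ => rfl⟩

/-- Under (P-ρS), the map `u ↦ u*` (where `u*` is the unique point of `S`
with `u ≺ u*` such that `[u,u*]` supports `ρS`) is a homeomorphism of `S` onto `S`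
preserving the cyclic order: `u ≺ v` implies `u* ≺ v*`. -/
theorem stmt_8 (N : ℝ × ℝ → ℝ) (hN : IsNorm N) (ρ : ℝ) (hρ0 : 0 < ρ) (hρ1 : ρ < 1)
    (hP : PropP N ρ) (star : ℝ × ℝ → ℝ × ℝ)
    (hstar : ∀ u : ℝ × ℝ, N u = 1 →
      (N (star u) = 1 ∧ 0 < wedge u (star u) ∧ segInf N u (star u) = ρ) ∧
      ∀ w : ℝ × ℝ, N w = 1 → 0 < wedge u w → segInf N u w = ρ → w = star u) :
    (∃ h : {x : ℝ × ℝ // N x = 1} ≃ₜ {x : ℝ × ℝ // N x = 1},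
        ∀ x : {x : ℝ × ℝ // N x = 1}, (h x : ℝ × ℝ) = star x) ∧
    ∀ u v : ℝ × ℝ, N u = 1 → N v = 1 → 0 < wedge u v → 0 < wedge (star u) (star v) :=
  stmt_8_general N hN ρ hρ0 hρ1 star hstar
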